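/- Let f be holomorphic on a neighbourhood of z₀ ∈ ℂ with f^#(z₀) ≠ 0. Then log f^# is twice differentiable near z₀ and its Laplacian satisfies Δ(log f^#)(z₀) = −4 · (f^#(z₀))²; in particular Δ(log f^#)(z₀) < 0, so f^# cannot attain a local minimum at z₀. -/

import Mathlib

open Complex Metric Set Filter Topology
open scoped Classical

/-- The spherical derivative of a meromorphic function: `|f'|/(1+|f|²)` at
points where `f` is analytic (finite), and `(1/f)^#` at poles. -/
noncomputable def sphDeriv (f : ℂ → ℂ) (z : ℂ) : ℝ :=
  if AnalyticAt ℂ f z then ‖deriv f z‖ / (1 + ‖f z‖ ^ 2)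
  else ‖deriv (fun w => (f w)⁻¹) z‖ / (1 + ‖(f z)⁻¹‖ ^ 2)

/-- `f` is meromorphic on `D`, normalized so that at every non-analytic point
(i.e. pole) the value of `f` is `0` and the reciprocal `1/f` is analytic
(it is the analytic extension, vanishing at the pole). -/
def MeromorphicNiceOn (f : ℂ → ℂ) (D : Set ℂ) : Prop :=
  MeromorphicOn f D ∧
    ∀ z ∈ D, ¬ AnalyticAt ℂ f z → f z = 0 ∧ AnalyticAt ℂ (fun w => (f w)⁻¹) z

/-- The chordal (spherical) distance on the Riemann sphere `ℂ ∪ {∞}`. -/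
noncomputable def chordalDist : OnePoint ℂ → OnePoint ℂ → ℝ
  | Option.some z, Option.some w =>
      ‖z - w‖ / (Real.sqrt (1 + ‖z‖ ^ 2) * Real.sqrt (1 + ‖w‖ ^ 2))
  | Option.some z, Option.none => 1 / Real.sqrt (1 + ‖z‖ ^ 2)
  | Option.none, Option.some w => 1 / Real.sqrt (1 + ‖w‖ ^ 2)
  | Option.none, Option.none => 0

/-- A meromorphic function viewed as a map into the Riemann sphere: at
non-analytic points (poles) the value is `∞`. -/
noncomputable def spherify (f : ℂ → ℂ) (z : ℂ) : OnePoint ℂ :=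
  if AnalyticAt ℂ f z then (f z : OnePoint ℂ) else OnePoint.infty

/-- Locally uniform convergence on `D` with respect to the chordal metric. -/
def SphTendstoLocallyUniformlyOn (F : ℕ → ℂ → OnePoint ℂ) (g : ℂ → OnePoint ℂ)
    (D : Set ℂ) : Prop :=
  ∀ ε : ℝ, 0 < ε → ∀ z ∈ D, ∃ t ∈ 𝓝[D] z,
    ∀ᶠ n in atTop, ∀ w ∈ t, chordalDist (F n w) (g w) < ε

/-- A family of meromorphic functions is normal on `D` if every sequence has a
subsequence converging locally uniformly on `D` with respect to the spherical
metric (the limit may take the value `∞`, e.g. be the constant `∞`). -/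
def SphNormalOn (𝓕 : Set (ℂ → ℂ)) (D : Set ℂ) : Prop :=
  ∀ F : ℕ → ℂ → ℂ, (∀ n, F n ∈ 𝓕) →
    ∃ φ : ℕ → ℕ, StrictMono φ ∧ ∃ g : ℂ → OnePoint ℂ,
      SphTendstoLocallyUniformlyOn (fun n => spherify (F (φ n))) g D


/-- The Laplacian `∂²u/∂x² + ∂²u/∂y²` of a function `u : ℂ → ℝ`. -/
noncomputable def laplacian (u : ℂ → ℝ) (z : ℂ) : ℝ :=
  fderiv ℝ (fun w => fderiv ℝ u w 1) z 1 +
    fderiv ℝ (fun w => fderiv ℝ u w Complex.I) z Complex.I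

/-!
Where `f` is holomorphic with `f' ≠ 0`, `log f^# = log |f'| - log (1 + |f|²)`. The first term is
harmonic. For the second, summing the second directional derivatives along `1` and `i`, the
`f''` terms cancel because `i² = -1`, and `⟪f, f'⟫² + ⟪f, f' i⟫² = |f|² |f'|²`; this leaves
`Δ log (1 + |f|²) = 4 |f'|² / (1 + |f|²)²`. At a local minimum of a `C²` function every second
directional derivative is nonnegative: if one were negative, the second-derivative test would
make the restriction to that line also a local maximum, hence locally constant.
-/

open scoped Laplacian RealInnerProductSpace

theorem IsLocalMin.deriv_deriv_nonneg {ψ : ℝ → ℝ} {t₀ : ℝ} (h : IsLocalMin ψ t₀)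
    (hc : ContinuousAt ψ t₀) : 0 ≤ deriv (deriv ψ) t₀ := by
  by_contra! hneg
  have hconst : ψ =ᶠ[𝓝 t₀] fun _ => ψ t₀ := by
    filter_upwards [h, isLocalMax_of_deriv_deriv_neg hneg h.deriv_eq_zero hc] with t hmin hmax
    exact le_antisymm hmax hmin
  have hderiv : deriv ψ =ᶠ[𝓝 t₀] fun _ => 0 := by
    filter_upwards [hconst.eventually_nhds] with t ht
    simpa using Filter.EventuallyEq.deriv_eq ht
  simp [hderiv.deriv_eq] at hneg

section

variable {E : Type*} [NormedAddCommGroup E] [NormedSpace ℝ E]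

theorem ContDiffAt.fderiv_fderiv_apply_eq_deriv_deriv {F : Type*} [NormedAddCommGroup F]
    [NormedSpace ℝ F] {u : E → F} {z : E} (hu : ContDiffAt ℝ 2 u z) (v : E) :
    fderiv ℝ (fun w => fderiv ℝ u w v) z v = deriv (deriv fun t : ℝ => u (z + t • v)) 0 := by
  have hline : ∀ t : ℝ, HasDerivAt (fun t : ℝ => z + t • v) v t := fun t => by
    simpa using ((hasDerivAt_id t).smul_const v).const_add z
  have hdiff : ∀ᶠ w in 𝓝 z, DifferentiableAt ℝ u w :=
    (hu.eventually (by simp)).mono fun w hw => hw.differentiableAt (by simp)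
  have hline_tendsto : Tendsto (fun t : ℝ => z + t • v) (𝓝 0) (𝓝 z) := by
    simpa using (hline 0).continuousAt.tendsto
  have hfirst : deriv (fun t : ℝ => u (z + t • v)) =ᶠ[𝓝 0] fun t => fderiv ℝ u (z + t • v) v := by
    filter_upwards [hline_tendsto.eventually hdiff] with t ht
    exact (ht.hasFDerivAt.comp_hasDerivAt t (hline t)).deriv
  have hDv : DifferentiableAt ℝ (fun w => fderiv ℝ u w v) z :=
    ((hu.fderiv_right (m := 1) (by norm_num)).differentiableAt one_ne_zero).clm_apply
      (differentiableAt_const v)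
  rw [hfirst.deriv_eq]
  exact (hDv.hasFDerivAt.comp_hasDerivAt_of_eq (0 : ℝ) (hline 0) (by simp)).deriv.symm

theorem IsLocalMin.fderiv_fderiv_apply_nonneg {u : E → ℝ} {z : E} (h : IsLocalMin u z)
    (hu : ContDiffAt ℝ 2 u z) (v : E) : 0 ≤ fderiv ℝ (fun w => fderiv ℝ u w v) z v := by
  rw [hu.fderiv_fderiv_apply_eq_deriv_deriv]
  have hz : z + (0 : ℝ) • v = z := by simp
  have hline : Continuous fun t : ℝ => z + t • v := by fun_prop
  have hmin : IsLocalMin u (z + (0 : ℝ) • v) := by rwa [hz]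
  exact IsLocalMin.deriv_deriv_nonneg
    (IsLocalMin.comp_continuous (g := fun t : ℝ => z + t • v) (b := 0) hmin hline.continuousAt)
    (hu.continuousAt.comp_of_eq hline.continuousAt hz)

end

theorem IsLocalMin.laplacian_nonneg {u : ℂ → ℝ} {z : ℂ} (h : IsLocalMin u z)
    (hu : ContDiffAt ℝ 2 u z) : 0 ≤ laplacian u z :=
  add_nonneg (h.fderiv_fderiv_apply_nonneg hu 1) (h.fderiv_fderiv_apply_nonneg hu I)

theorem ContDiffAt.laplacian_eq_laplacian {u : ℂ → ℝ} {z : ℂ} (hu : ContDiffAt ℝ 2 u z) :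
    laplacian u z = Δ u z := by
  have hD : DifferentiableAt ℝ (fderiv ℝ u) z :=
    (hu.fderiv_right (m := 1) (by norm_num)).differentiableAt one_ne_zero
  simp [laplacian, InnerProductSpace.laplacian_eq_iteratedFDeriv_complexPlane,
    iteratedFDeriv_two_apply, fderiv_clm_apply hD (differentiableAt_const _)]

section

variable {E F : Type*} [NormedAddCommGroup E] [NormedSpace ℝ E] [NormedAddCommGroup F]
  [InnerProductSpace ℝ F] {g : E → F} {x : E}

theorem hasFDerivAt_log_one_add_norm_sq {g' : E →L[ℝ] F} (hg : HasFDerivAt g g' x) :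
    HasFDerivAt (fun y => Real.log (1 + ‖g y‖ ^ 2))
      ((1 + ‖g x‖ ^ 2)⁻¹ • (2 • (innerSL ℝ (g x)).comp g')) x :=
  (hg.norm_sq.const_add 1).log (by positivity)

theorem fderiv_log_one_add_norm_sq_apply (hg : DifferentiableAt ℝ g x) (v : E) :
    fderiv ℝ (fun y => Real.log (1 + ‖g y‖ ^ 2)) x v =
      2 * ⟪g x, fderiv ℝ g x v⟫ / (1 + ‖g x‖ ^ 2) := by
  rw [(hasFDerivAt_log_one_add_norm_sq hg.hasFDerivAt).fderiv]
  simp only [smul_apply, ContinuousLinearMap.comp_apply, coe_innerSL_apply, nsmul_eq_mul,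
    Nat.cast_ofNat, smul_eq_mul]
  ring

theorem fderiv_fderiv_log_one_add_norm_sq_apply {v : E}
    (hg : ∀ᶠ y in 𝓝 x, DifferentiableAt ℝ g y)
    (hg' : DifferentiableAt ℝ (fun y => fderiv ℝ g y v) x) :
    fderiv ℝ (fun y => fderiv ℝ (fun y => Real.log (1 + ‖g y‖ ^ 2)) y v) x v =
      2 * (‖fderiv ℝ g x v‖ ^ 2 + ⟪g x, fderiv ℝ (fun y => fderiv ℝ g y v) x v⟫) /
          (1 + ‖g x‖ ^ 2) -
        4 * ⟪g x, fderiv ℝ g x v⟫ ^ 2 / (1 + ‖g x‖ ^ 2) ^ 2 := by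
  have hfirst : (fun y => fderiv ℝ (fun y => Real.log (1 + ‖g y‖ ^ 2)) y v) =ᶠ[𝓝 x]
      fun y => 2 * ⟪g y, fderiv ℝ g y v⟫ / (1 + ‖g y‖ ^ 2) := by
    filter_upwards [hg] with y hy
    exact fderiv_log_one_add_norm_sq_apply hy v
  have hgx := hg.self_of_nhds.hasFDerivAt
  have hnum := (hgx.inner ℝ hg'.hasFDerivAt).const_mul 2
  have hden : HasFDerivAt (fun y => (1 + ‖g y‖ ^ 2)⁻¹) _ x :=
    (hasDerivAt_inv (by positivity)).comp_hasFDerivAt x (hgx.norm_sq.const_add 1)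
  simp_rw [div_eq_mul_inv] at hfirst ⊢
  rw [hfirst.fderiv_eq, (hnum.fun_mul hden).fderiv]
  simp only [neg_smul, smul_neg, add_apply, neg_apply, smul_apply, ContinuousLinearMap.comp_apply,
    coe_innerSL_apply, nsmul_eq_mul, Nat.cast_ofNat, smul_eq_mul, ContinuousLinearMap.prod_apply,
    fderivInnerCLM_apply, inner_self_eq_norm_sq_to_K, Real.ringHom_apply]
  ring

end

theorem DifferentiableAt.fderiv_real_apply {g : ℂ → ℂ} {z : ℂ} (hg : DifferentiableAt ℂ g z)
    (v : ℂ) : fderiv ℝ g z v = deriv g z * v := by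
  simp [hg.hasDerivAt.complexToReal_fderiv.fderiv]

theorem Complex.inner_sq_add_inner_mul_I_sq (a b : ℂ) :
    ⟪a, b⟫ ^ 2 + ⟪a, b * I⟫ ^ 2 = ‖a‖ ^ 2 * ‖b‖ ^ 2 := by
  simp only [Complex.inner, Complex.sq_norm, Complex.normSq_apply, Complex.mul_re, Complex.mul_im,
    Complex.conj_re, Complex.conj_im, Complex.I_re, Complex.I_im]
  ring

theorem AnalyticAt.laplacian_log_one_add_norm_sq {g : ℂ → ℂ} {z : ℂ} (hg : AnalyticAt ℂ g z) :
    laplacian (fun w => Real.log (1 + ‖g w‖ ^ 2)) z =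
      4 * ‖deriv g z‖ ^ 2 / (1 + ‖g z‖ ^ 2) ^ 2 := by
  have hdiff : ∀ᶠ w in 𝓝 z, DifferentiableAt ℂ g w :=
    hg.eventually_analyticAt.mono fun w hw => hw.differentiableAt
  have hderiv : DifferentiableAt ℂ (deriv g) z := hg.deriv.differentiableAt
  have hdir : ∀ v : ℂ, (fun w => fderiv ℝ g w v) =ᶠ[𝓝 z] fun w => deriv g w * v := fun v => by
    filter_upwards [hdiff] with w hw
    exact hw.fderiv_real_apply v
  have hsecond : ∀ v : ℂ, fderiv ℝ (fun w => fderiv ℝ g w v) z v = deriv (deriv g) z * v * v :=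
    fun v => by
      rw [(hdir v).fderiv_eq, (hderiv.mul_const v).fderiv_real_apply, deriv_mul_const hderiv]
  have hdir_diff : ∀ v : ℂ, DifferentiableAt ℝ (fun w => fderiv ℝ g w v) z := fun v =>
    ((hderiv.mul_const v).restrictScalars ℝ).congr_of_eventuallyEq (hdir v)
  have hdiffℝ := hdiff.mono fun w hw => hw.restrictScalars ℝ
  rw [laplacian, fderiv_fderiv_log_one_add_norm_sq_apply hdiffℝ (hdir_diff 1),
    fderiv_fderiv_log_one_add_norm_sq_apply hdiffℝ (hdir_diff I), hsecond, hsecond,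
    hdiff.self_of_nhds.fderiv_real_apply, hdiff.self_of_nhds.fderiv_real_apply]
  have hI : deriv (deriv g) z * I * I = -deriv (deriv g) z := by rw [mul_assoc, I_mul_I]; ring
  simp only [hI, inner_neg_right, Complex.norm_mul, norm_I, mul_one]
  field_simp
  linear_combination (-4) * Complex.inner_sq_add_inner_mul_I_sq (g z) (deriv g z)

theorem sphDeriv_eq_of_analyticAt {f : ℂ → ℂ} {z : ℂ} (hf : AnalyticAt ℂ f z) :
    sphDeriv f z = ‖deriv f z‖ / (1 + ‖f z‖ ^ 2) :=
  if_pos hf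

theorem AnalyticAt.log_sphDeriv_eventuallyEq {f : ℂ → ℂ} {z : ℂ} (hf : AnalyticAt ℂ f z)
    (hd : deriv f z ≠ 0) :
    (fun w => Real.log (sphDeriv f w)) =ᶠ[𝓝 z]
      fun w => Real.log ‖deriv f w‖ - Real.log (1 + ‖f w‖ ^ 2) := by
  filter_upwards [hf.eventually_analyticAt, hf.deriv.continuousAt.eventually_ne hd] with w hw hdw
  rw [sphDeriv_eq_of_analyticAt hw, Real.log_div (norm_ne_zero_iff.mpr hdw) (by positivity)]

theorem AnalyticAt.contDiffAt_log_one_add_norm_sq {g : ℂ → ℂ} {z : ℂ} (hg : AnalyticAt ℂ g z) :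
    ContDiffAt ℝ 2 (fun w => Real.log (1 + ‖g w‖ ^ 2)) z :=
  have hg₂ : ContDiffAt ℝ 2 g z := hg.contDiffAt.restrict_scalars ℝ
  (contDiffAt_const.add (hg₂.norm_sq ℝ)).log (by positivity)

theorem AnalyticAt.contDiffAt_log_sphDeriv {f : ℂ → ℂ} {z : ℂ} (hf : AnalyticAt ℂ f z)
    (hd : deriv f z ≠ 0) : ContDiffAt ℝ 2 (fun w => Real.log (sphDeriv f w)) z :=
  ((hf.deriv.harmonicAt_log_norm hd).1.sub hf.contDiffAt_log_one_add_norm_sq).congr_of_eventuallyEq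
    (hf.log_sphDeriv_eventuallyEq hd)

theorem AnalyticAt.laplacian_log_sphDeriv {f : ℂ → ℂ} {z : ℂ} (hf : AnalyticAt ℂ f z)
    (hd : deriv f z ≠ 0) :
    laplacian (fun w => Real.log (sphDeriv f w)) z = -4 * sphDeriv f z ^ 2 := by
  have hharm := hf.deriv.harmonicAt_log_norm hd
  have hsmooth := hf.contDiffAt_log_one_add_norm_sq
  rw [(hf.contDiffAt_log_sphDeriv hd).laplacian_eq_laplacian,
    (InnerProductSpace.laplacian_congr_nhds (hf.log_sphDeriv_eventuallyEq hd)).self_of_nhds]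
  have hsub := hharm.1.laplacian_sub hsmooth
  simp only [Pi.sub_def] at hsub
  rw [hsub, hharm.2.self_of_nhds, ← hsmooth.laplacian_eq_laplacian,
    hf.laplacian_log_one_add_norm_sq, sphDeriv_eq_of_analyticAt hf, Pi.zero_apply, div_pow]
  ring

/-- If `f` is holomorphic near `z₀` with `f^#(z₀) ≠ 0`, then
`log f^#` is twice (continuously) differentiable near `z₀`, its Laplacian at `z₀`
equals `-4 (f^#(z₀))² < 0`, and `f^#` has no local minimum at `z₀`. -/
theorem laplacian_log_sphDeriv (f : ℂ → ℂ) (z₀ : ℂ) (U : Set ℂ)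
    (hU : IsOpen U) (hz₀ : z₀ ∈ U) (hf : DifferentiableOn ℂ f U)
    (hne : sphDeriv f z₀ ≠ 0) :
    (∀ᶠ z in 𝓝 z₀, ContDiffAt ℝ 2 (fun w => Real.log (sphDeriv f w)) z) ∧
    laplacian (fun w => Real.log (sphDeriv f w)) z₀ = -4 * (sphDeriv f z₀) ^ 2 ∧
    laplacian (fun w => Real.log (sphDeriv f w)) z₀ < 0 ∧
    ¬ IsLocalMin (sphDeriv f) z₀ := by
  have hfa : AnalyticAt ℂ f z₀ := hf.analyticAt (hU.mem_nhds hz₀)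
  have hd : deriv f z₀ ≠ 0 := fun h => hne (by simp [sphDeriv_eq_of_analyticAt hfa, h])
  have hpos : 0 < sphDeriv f z₀ := by
    rw [sphDeriv_eq_of_analyticAt hfa]; exact div_pos (norm_pos_iff.mpr hd) (by positivity)
  have hlap := hfa.laplacian_log_sphDeriv hd
  have hlap_neg : laplacian (fun w => Real.log (sphDeriv f w)) z₀ < 0 := by
    rw [hlap]; linarith [pow_pos hpos 2]
  refine ⟨?_, hlap, hlap_neg, fun hmin => ?_⟩
  · filter_upwards [hfa.eventually_analyticAt, hfa.deriv.continuousAt.eventually_ne hd]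
      with w hw hdw
    exact hw.contDiffAt_log_sphDeriv hdw
  · have hlogmin : IsLocalMin (fun w => Real.log (sphDeriv f w)) z₀ := by
      filter_upwards [hmin] with w hw
      exact Real.log_le_log hpos hw
    exact (hlogmin.laplacian_nonneg (hfa.contDiffAt_log_sphDeriv hd)).not_gt hlap_neg
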